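/- Let (F, d_Q, ω) and (F̃, d̃_Q, ω̃) be degree-k Poincaré complexes with quadratic Hamiltonians S(x) = (1/2) ω(d_Q x, x) and S̃(x̃) = (1/2) ω̃(d̃_Q x̃, x̃). Suppose f : F → F̃ and g : F̃ → F are chain maps, H̃ : F̃^• → F̃^{•−1} is a linear map satisfying d̃_Q H̃ + H̃ d̃_Q = id_{F̃} − f∘g, and ω̃(f(x), f(y)) = ω(x, y) for all x, y ∈ F. Let β̃ be the bilinear form on F̃ defined on homogeneous elements by β̃(x̃, ỹ) = (−1)^{k+1} [ ( ω̃(H̃ x̃, ỹ) + (−1)^{|x̃|+1} ω̃(x̃, H̃ ỹ) ) + (1/2)( −ω̃(H̃ x̃, H̃ d̃_Q ỹ) + (−1)^{|x̃|} ω̃(H̃ d̃_Q x̃, H̃ ỹ) ) − ω̃(H̃ x̃, d̃_Q H̃ ỹ) ]. Then for every homogeneous x̃ ∈ F̃ one has S(g(x̃)) = S̃(x̃) + (1/2) (−1)^{k+|x̃|} β̃(d̃_Q x̃, d̃_Q x̃). -/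

import Mathlib

/-!
Write `u = dₜx`. Since `g` is a chain map and `f` preserves the pairings,
`S(g x) = ½ ωₜ(f g u, f g x)`. The homotopy gives `f g x = x - dₜHₜx - Hₜu` and, since `u` is
closed, `f g u = u - dₜHₜu`. Expanding, every pairing of two boundaries vanishes, and the surviving
terms `ωₜ(u, Hₜu)`, `ωₜ(Hₜu, u)`, `ωₜ(Hₜu, dₜHₜu)` are exactly those of `βₜ(u, u)`; the signs
match because `2|x| + 1 = -k` forces `k` to be odd.
-/

theorem neg_one_zpow_eq_of_even_sub {α : Type*} [DivisionRing α] {m n : ℤ} (h : Even (m - n)) :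
    (-1 : α) ^ m = (-1 : α) ^ n := by
  rw [← sub_add_cancel m n, zpow_add₀ (by norm_num), h.neg_one_zpow, one_mul]

/- The maps carry their source and target degrees together with a proof relating them, so the
lemmas below allow arbitrary degrees related by equations: they then apply where the degrees are
not syntactically `i + 1` or `i - 1` (e.g. `i + 1 - 1` against `i`). -/

section GradedComplex

variable {k : ℤ} {E : ℤ → Type*} [∀ i, AddCommGroup (E i)] [∀ i, Module ℝ (E i)]
  {d : ∀ i j : ℤ, j = i + 1 → (E i →ₗ[ℝ] E j)} {ω : ∀ i j : ℤ, i + j = -k → (E i →ₗ[ℝ] E j →ₗ[ℝ] ℝ)}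

theorem differential_differential_apply
    (hd2 : ∀ i (x : E i), d (i+1) (i+2) (by linarith) (d i (i+1) rfl x) = 0)
    {a b c : ℤ} (hab : b = a + 1) (hbc : c = b + 1) (x : E a) :
    d b c hbc (d a b hab x) = 0 := by
  subst hab
  obtain rfl : c = a + 2 := by omega
  exact hd2 a x

theorem pairing_differential_differential
    (hd2 : ∀ i (x : E i), d (i+1) (i+2) (by linarith) (d i (i+1) rfl x) = 0)
    (hω_d : ∀ i j (h : i + 1 + j = -k) (h' : i + (j + 1) = -k) (x : E i) (y : E j),
        ω (i+1) j h (d i (i+1) rfl x) y = (-1 : ℝ) ^ i * ω i (j+1) h' x (d j (j+1) rfl y))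
    {a b c : ℤ} (h : a + 1 + b = -k) (hcb : b = c + 1) (x : E a) (y : E c) :
    ω (a+1) b h (d a (a+1) rfl x) (d c b hcb y) = 0 := by
  rw [hω_d a b h (by linarith), differential_differential_apply hd2 hcb rfl, map_zero, mul_zero]

variable {F : ℤ → Type*} [∀ i, AddCommGroup (F i)] [∀ i, Module ℝ (F i)]
  {f : ∀ i, F i →ₗ[ℝ] E i} {g : ∀ i, E i →ₗ[ℝ] F i} {H : ∀ i j : ℤ, j = i - 1 → (E i →ₗ[ℝ] E j)}

theorem homotopy_apply
    (hH : ∀ i (x : E i),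
        d (i-1) i (by linarith) (H i (i-1) rfl x) + H (i+1) i (by linarith) (d i (i+1) rfl x)
          = x - f i (g i x))
    {a b c : ℤ} (hb : b = a - 1) (hba : a = b + 1) (hc : c = a + 1) (hca : a = c - 1) (x : E a) :
    d b a hba (H a b hb x) + H c a hca (d a c hc x) = x - f a (g a x) := by
  subst hb hc
  exact hH a x

theorem comp_apply_of_differential_eq_zero
    (hH : ∀ i (x : E i),
        d (i-1) i (by linarith) (H i (i-1) rfl x) + H (i+1) i (by linarith) (d i (i+1) rfl x)
          = x - f i (g i x))
    {a b : ℤ} (hb : b = a - 1) (hba : a = b + 1) {x : E a} (hx : d a (a+1) rfl x = 0) :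
    f a (g a x) = x - d b a hba (H a b hb x) := by
  have := homotopy_apply hH hb hba rfl (by linarith) x
  rw [hx, map_zero, add_zero] at this
  rw [this, sub_sub_cancel]

theorem beta_apply_self_of_differential_eq_zero
    {β : ∀ i j : ℤ, i + j = 1 - k → (E i →ₗ[ℝ] E j →ₗ[ℝ] ℝ)}
    (hβ : ∀ i j (h : i + j = 1 - k) (x : E i) (y : E j),
        β i j h x y = (-1 : ℝ) ^ (k+1) *
          ( ( ω (i-1) j (by linarith) (H i (i-1) rfl x) y
              + (-1 : ℝ) ^ (i+1) * ω i (j-1) (by linarith) x (H j (j-1) rfl y) )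
            + (1/2) *
              ( - ω (i-1) j (by linarith) (H i (i-1) rfl x)
                    (H (j+1) j (by linarith) (d j (j+1) rfl y))
                + (-1 : ℝ) ^ i * ω i (j-1) (by linarith)
                    (H (i+1) i (by linarith) (d i (i+1) rfl x)) (H j (j-1) rfl y) )
            - ω (i-1) j (by linarith) (H i (i-1) rfl x)
                (d (j-1) j (by linarith) (H j (j-1) rfl y)) ))
    {a b : ℤ} (hb : b = a - 1) (hba : a = b + 1) (h : b + a = -k) (h' : a + b = -k)
    (haa : a + a = 1 - k) {u : E a} (hu : d a (a+1) rfl u = 0) :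
    β a a haa u u = (-1 : ℝ) ^ (k+1) *
      (ω b a h (H a b hb u) u + (-1 : ℝ) ^ (a+1) * ω a b h' u (H a b hb u)
        - ω b a h (H a b hb u) (d b a hba (H a b hb u))) := by
  subst hb
  rw [hβ, hu]
  simp only [map_zero, LinearMap.zero_apply, mul_zero, neg_zero, add_zero]

end GradedComplex

/-- Let `(F, d, ω)` and `(Ft, dt, ωt)` be degree-`k` Poincaré complexes with quadratic
Hamiltonians `S(x) = ½ ω(d x, x)`, `St(x) = ½ ωt(dt x, x)`.  Suppose `f, g` are chain
maps, `Ht` is a chain homotopy with `dt Ht + Ht dt = id - f∘g`, and `f` preserves the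
pairings.  With `βt` defined by the explicit formula of Lemma 1.5, for every homogeneous
`x` one has `S(g x) = St(x) + ½ (-1)^{k+|x|} βt(dt x, dt x)`. -/
theorem hamiltonian_pullback_along_quasi_inverse
    (k : ℤ)
    (F : ℤ → Type*) [∀ i, AddCommGroup (F i)] [∀ i, Module ℝ (F i)]
    (Ft : ℤ → Type*) [∀ i, AddCommGroup (Ft i)] [∀ i, Module ℝ (Ft i)]
    -- the differentials (degree +1, squaring to zero)
    (d : ∀ i j : ℤ, j = i + 1 → (F i →ₗ[ℝ] F j))
    (dt : ∀ i j : ℤ, j = i + 1 → (Ft i →ₗ[ℝ] Ft j))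
    (hdt2 : ∀ i (x : Ft i), dt (i+1) (i+2) (by omega) (dt i (i+1) rfl x) = 0)
    -- the degree-k pairings
    (ω : ∀ i j : ℤ, i + j = -k → (F i →ₗ[ℝ] F j →ₗ[ℝ] ℝ))
    (ωt : ∀ i j : ℤ, i + j = -k → (Ft i →ₗ[ℝ] Ft j →ₗ[ℝ] ℝ))
    -- compatibility with the differential:  ω(d x, y) = (-1)^{|x|} ω(x, d y)
    (hωt_d : ∀ i j (h : i + 1 + j = -k) (h' : i + (j + 1) = -k) (x : Ft i) (y : Ft j),
        ωt (i+1) j h (dt i (i+1) rfl x) y = (-1 : ℝ) ^ i * ωt i (j+1) h' x (dt j (j+1) rfl y))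
    -- chain maps f, g
    (f : ∀ i, F i →ₗ[ℝ] Ft i) (g : ∀ i, Ft i →ₗ[ℝ] F i)
    (hg : ∀ i (x : Ft i), g (i+1) (dt i (i+1) rfl x) = d i (i+1) rfl (g i x))
    -- chain homotopy:  dt Ht + Ht dt = id - f g
    (Ht : ∀ i j : ℤ, j = i - 1 → (Ft i →ₗ[ℝ] Ft j))
    (hHt : ∀ i (x : Ft i),
        dt (i-1) i (by omega) (Ht i (i-1) rfl x) + Ht (i+1) i (by omega) (dt i (i+1) rfl x)
          = x - f i (g i x))
    -- f preserves the pairings:  ωt(f x, f y) = ω(x, y)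
    (hfω : ∀ i j (h : i + j = -k) (x : F i) (y : F j),
        ωt i j h (f i x) (f j y) = ω i j h x y)
    -- the degree-(k-1) bilinear form βt defined by the explicit formula
    (βt : ∀ i j : ℤ, i + j = 1 - k → (Ft i →ₗ[ℝ] Ft j →ₗ[ℝ] ℝ))
    (hβ : ∀ i j (h : i + j = 1 - k) (x : Ft i) (y : Ft j),
        βt i j h x y = (-1 : ℝ) ^ (k+1) *
          ( ( ωt (i-1) j (by omega) (Ht i (i-1) rfl x) y
              + (-1 : ℝ) ^ (i+1) * ωt i (j-1) (by omega) x (Ht j (j-1) rfl y) )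
            + (1/2) *
              ( - ωt (i-1) j (by omega) (Ht i (i-1) rfl x)
                    (Ht (j+1) j (by omega) (dt j (j+1) rfl y))
                + (-1 : ℝ) ^ i * ωt i (j-1) (by omega)
                    (Ht (i+1) i (by omega) (dt i (i+1) rfl x)) (Ht j (j-1) rfl y) )
            - ωt (i-1) j (by omega) (Ht i (i-1) rfl x)
                (dt (j-1) j (by omega) (Ht j (j-1) rfl y)) )) :
    -- conclusion:  S(g x) = St(x) + ½ (-1)^{k+|x|} βt(dt x, dt x),
    -- where S(y) = ½ ω(d y, y) and St(x) = ½ ωt(dt x, x)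
    ∀ i (h : i + 1 + i = -k) (x : Ft i),
      (1/2 : ℝ) * ω (i+1) i h (d i (i+1) rfl (g i x)) (g i x)
        = (1/2 : ℝ) * ωt (i+1) i h (dt i (i+1) rfl x) x
          + (1/2 : ℝ) * (-1 : ℝ) ^ (k + i) *
              βt (i+1) (i+1) (by omega) (dt i (i+1) rfl x) (dt i (i+1) rfl x) := by
  intro i h x
  set u := dt i (i+1) rfl x
  have hu : dt (i+1) (i+1+1) rfl u = 0 := differential_differential_apply hdt2 rfl rfl x
  have hfgx : f i (g i x)
      = x - (dt (i-1) i (by omega) (Ht i (i-1) rfl x) + Ht (i+1) i (by omega) u) := by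
    rw [hHt i x, sub_sub_cancel]
  have hfgu : f (i+1) (g (i+1) u) = u - dt i (i+1) rfl (Ht (i+1) i (by omega) u) :=
    comp_apply_of_differential_eq_zero hHt (by omega) rfl hu
  have hβu := beta_apply_self_of_differential_eq_zero hβ (b := i) (by omega) rfl (by omega) h
    (by omega) hu
  rw [← hg i x, ← hfω (i+1) i h, hfgu, hfgx, hβu]
  simp only [map_sub, map_add, LinearMap.sub_apply]
  set Hx := Ht i (i-1) rfl x
  set Hu := Ht (i+1) i (by omega) u
  rw [pairing_differential_differential hdt2 hωt_d h _ x Hx,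
    pairing_differential_differential hdt2 hωt_d h _ Hu Hx, hωt_d i i h (by omega) Hu x,
    hωt_d i i h (by omega) Hu Hu]
  have hk : (-1 : ℝ) ^ (k+1) = 1 := Even.neg_one_zpow ⟨-i, by omega⟩
  have hki : (-1 : ℝ) ^ (k+i) = -(-1) ^ i := by
    rw [neg_one_zpow_eq_of_even_sub (n := i+1) ⟨-i-1, by omega⟩, zpow_add_one₀ (by norm_num)]
    ring
  have hi2 : (-1 : ℝ) ^ (i+1+1) = (-1) ^ i := neg_one_zpow_eq_of_even_sub ⟨1, by omega⟩
  have hii : (-1 : ℝ) ^ i * (-1) ^ i = 1 := by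
    rw [← zpow_add₀ (by norm_num)]
    exact Even.neg_one_zpow ⟨i, rfl⟩
  rw [hk, hki, hi2]
  linear_combination (1/2 * ωt (i+1) i h u Hu) * hii
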